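/- Let X_1, …, X_n be independent square-integrable random vectors in ℝ^d with E[X_i] = 0 and ∑_{i=1}^n E[X_i X_iᵀ] = n I_d (i.e. ∑_i E[X_{ij} X_{ik}] = n δ_{jk} for all j, k). Let (X′_1, …, X′_n) be an independent copy of (X_1, …, X_n) (independent of it), and let I be uniformly distributed on {1, …, n} and independent of all the X_i and X′_i. Set W = n^{−1/2} ∑_{i=1}^n X_i and δ = n^{−1/2}(X′_I − X_I). Then for all 1 ≤ j, k ≤ d, almost surely E[δ_j δ_k | σ(W)] = (2/n) δ_{jk} + (1/n)( E[ (1/n) ∑_{i=1}^n X_{ij} X_{ik} | σ(W) ] − δ_{jk} ), where δ_j denotes the j-th coordinate of δ and δ_{jk} the Kronecker delta. -/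

import Mathlib

/-!
Take `s = W⁻¹' B`; it is measurable for the σ-algebra generated by `X = (X_1, …, X_n)`.
Since `I` is uniform and independent of `(X, X')`, integrating out `I` gives
`∫_s δ_j δ_k = n⁻² ∑ᵢ ∫_s (X'ᵢⱼ - Xᵢⱼ)(X'ᵢₖ - Xᵢₖ)`. As `X'` is centred and independent of `X`,
the cross terms vanish and `∫_s X'ᵢⱼ X'ᵢₖ = μ(s) E[Xᵢⱼ Xᵢₖ]`, so by the normalisation of the
covariances `∫_s δ_j δ_k = n⁻¹ (δ_jk μ(s) + ∫_s n⁻¹ ∑ᵢ Xᵢⱼ Xᵢₖ)`, which characterises the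
conditional expectation.
-/

open MeasureTheory ProbabilityTheory

lemma apply_index_eq_sum_indicator {Ω ι E : Type*} [Fintype ι] [AddCommMonoid E]
    (Y : ι → Ω → E) (I : Ω → ι) (ω : Ω) :
    Y (I ω) ω = ∑ i, (I ⁻¹' {i}).indicator (Y i) ω := by
  classical
  simp [Set.indicator_apply, eq_comm]

lemma ProbabilityTheory.iIndepFun.indepFun_sumElim {Ω ι κ β : Type*} [MeasurableSpace Ω]
    {μ : Measure Ω} [MeasurableSpace β] [Fintype ι] [Fintype κ] {X : ι → Ω → β} {Y : κ → Ω → β}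
    (h : iIndepFun (Sum.elim X Y) μ) (hX : ∀ i, Measurable (X i)) (hY : ∀ j, Measurable (Y j)) :
    IndepFun (fun ω i => X i ω) (fun ω j => Y j ω) μ := by
  have hmeas : ∀ i, Measurable (Sum.elim X Y i) := Sum.rec hX hY
  have hdisj : Disjoint (Finset.univ.map (.inl : ι ↪ ι ⊕ κ)) (Finset.univ.map .inr) := by
    simp [Finset.disjoint_left]
  refine (h.indepFun_finset _ _ hdisj hmeas).comp (φ := fun x i => x ⟨.inl i, by simp⟩)
    (ψ := fun y j => y ⟨.inr j, by simp⟩) ?_ ?_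
  · exact measurable_pi_lambda _ fun i => measurable_pi_apply _
  · exact measurable_pi_lambda _ fun j => measurable_pi_apply _

section
variable {Ω : Type*} {m m₁ m₂ : MeasurableSpace Ω} [mΩ : MeasurableSpace Ω] {μ : Measure Ω}

lemma setIntegral_mul_eq_mul_of_indep (h : Indep m₁ m₂ μ) (hm₁ : m₁ ≤ mΩ) (hm₂ : m₂ ≤ mΩ)
    {s : Set Ω} (hs : MeasurableSet[m₁] s) {f g : Ω → ℝ} (hf : Measurable[m₁] f)
    (hg : Measurable[m₂] g) :
    ∫ ω in s, f ω * g ω ∂μ = (∫ ω in s, f ω ∂μ) * ∫ ω, g ω ∂μ := by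
  have hfs : Measurable[m₁] (s.indicator f) := hf.indicator hs
  have hindep : IndepFun (s.indicator f) g μ := (IndepFun_iff_Indep _ _ _).2 <|
    indep_of_indep_of_le_right (indep_of_indep_of_le_left h hfs.comap_le) hg.comap_le
  rw [← integral_indicator (hm₁ _ hs), ← integral_indicator (hm₁ _ hs),
    ← hindep.integral_fun_mul_eq_mul_integral
      (hfs.mono hm₁ le_rfl).aestronglyMeasurable (hg.mono hm₂ le_rfl).aestronglyMeasurable]
  simp only [Set.indicator_mul_left]

lemma setIntegral_sub_mul_sub_of_indep (h : Indep m₁ m₂ μ) (hm₁ : m₁ ≤ mΩ) (hm₂ : m₂ ≤ mΩ)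
    {s : Set Ω} (hs : MeasurableSet[m₁] s) {a b a' b' : Ω → ℝ}
    (ha : Measurable[m₁] a) (hb : Measurable[m₁] b) (ha' : Measurable[m₂] a')
    (hb' : Measurable[m₂] b') (ha₂ : MemLp a 2 μ) (hb₂ : MemLp b 2 μ) (ha'₂ : MemLp a' 2 μ)
    (hb'₂ : MemLp b' 2 μ) (ha'₀ : ∫ ω, a' ω ∂μ = 0) (hb'₀ : ∫ ω, b' ω ∂μ = 0) :
    ∫ ω in s, (a' ω - a ω) * (b' ω - b ω) ∂μ
      = μ.real s * ∫ ω, a' ω * b' ω ∂μ + ∫ ω in s, a ω * b ω ∂μ := by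
  have hint {f g : Ω → ℝ} (hf : MemLp f 2 μ) (hg : MemLp g 2 μ) :
      IntegrableOn (fun ω => f ω * g ω) s μ := (hf.integrable_mul hg).integrableOn
  have h₁ : ∫ ω in s, a' ω * b' ω ∂μ = μ.real s * ∫ ω, a' ω * b' ω ∂μ := by
    simpa using setIntegral_mul_eq_mul_of_indep h hm₁ hm₂ hs (f := fun _ => 1) measurable_const
      (ha'.mul hb')
  have h₂ : ∫ ω in s, a ω * b' ω ∂μ = 0 := by
    rw [setIntegral_mul_eq_mul_of_indep h hm₁ hm₂ hs ha hb', hb'₀, mul_zero]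
  have h₃ : ∫ ω in s, b ω * a' ω ∂μ = 0 := by
    rw [setIntegral_mul_eq_mul_of_indep h hm₁ hm₂ hs hb ha', ha'₀, mul_zero]
  have hab'b : IntegrableOn (fun ω => a' ω * b' ω - a ω * b' ω) s μ :=
    (hint ha'₂ hb'₂).sub (hint ha₂ hb'₂)
  have hab'ba' : IntegrableOn (fun ω => a' ω * b' ω - a ω * b' ω - b ω * a' ω) s μ :=
    hab'b.sub (hint hb₂ ha'₂)
  calc ∫ ω in s, (a' ω - a ω) * (b' ω - b ω) ∂μ
      = ∫ ω in s, a' ω * b' ω - a ω * b' ω - b ω * a' ω + a ω * b ω ∂μ := by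
        congr 1 with ω
        ring
    _ = μ.real s * ∫ ω, a' ω * b' ω ∂μ + ∫ ω in s, a ω * b ω ∂μ := by
        rw [integral_add hab'ba' (hint ha₂ hb₂), integral_sub hab'b (hint hb₂ ha'₂),
          integral_sub (hint ha'₂ hb'₂) (hint ha₂ hb'₂), h₁, h₂, h₃, sub_zero, sub_zero]

lemma integrable_apply_index {ι E : Type*} [Fintype ι] [MeasurableSpace ι]
    [MeasurableSingletonClass ι] [NormedAddCommGroup E] {Y : ι → Ω → E}
    (hY : ∀ i, Integrable (Y i) μ) {I : Ω → ι} (hI : Measurable I) :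
    Integrable (fun ω => Y (I ω) ω) μ := by
  simp_rw [apply_index_eq_sum_indicator Y I]
  exact integrable_finsetSum _ fun i _ => (hY i).indicator (hI (measurableSet_singleton i))

lemma integral_apply_index_of_indep {ι : Type*} [Fintype ι] [MeasurableSpace ι]
    [MeasurableSingletonClass ι] {I : Ω → ι} (hI : Measurable I)
    (hm : m ≤ mΩ) (h : Indep (MeasurableSpace.comap I inferInstance) m μ) {F : ι → Ω → ℝ}
    (hF : ∀ i, Measurable[m] (F i)) (hFi : ∀ i, Integrable (F i) μ) :
    ∫ ω, F (I ω) ω ∂μ = ∑ i, μ.real (I ⁻¹' {i}) * ∫ ω, F i ω ∂μ := by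
  simp_rw [apply_index_eq_sum_indicator F I]
  rw [integral_finsetSum _ fun i _ => (hFi i).indicator (hI (measurableSet_singleton i))]
  refine Finset.sum_congr rfl fun i _ => ?_
  have hs : MeasurableSet[MeasurableSpace.comap I inferInstance] (I ⁻¹' {i}) :=
    ⟨{i}, measurableSet_singleton i, rfl⟩
  rw [integral_indicator (hI (measurableSet_singleton i))]
  simpa using setIntegral_mul_eq_mul_of_indep h hI.comap_le hm hs (f := fun _ => 1)
    measurable_const (hF i)

lemma setIntegral_index_sub_mul_sub_of_indep {ι E : Type*} [Fintype ι] [MeasurableSpace ι]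
    [MeasurableSingletonClass ι] [NormedAddCommGroup E] [NormedSpace ℝ E] [CompleteSpace E]
    [MeasurableSpace E] [BorelSpace E] [IsFiniteMeasure μ] {I : Ω → ι} (hI : Measurable I)
    (hm₁ : m₁ ≤ mΩ) (hm₂ : m₂ ≤ mΩ) (h : Indep m₁ m₂ μ)
    (hI_indep : Indep (MeasurableSpace.comap I inferInstance) (m₁ ⊔ m₂) μ) (φ ψ : E →L[ℝ] ℝ)
    {X X' : ι → Ω → E} (hX : ∀ i, Measurable[m₁] (X i)) (hX' : ∀ i, Measurable[m₂] (X' i))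
    (hX₂ : ∀ i, MemLp (X i) 2 μ) (hX'₂ : ∀ i, MemLp (X' i) 2 μ) (hX'₀ : ∀ i, ∫ ω, X' i ω ∂μ = 0)
    {s : Set Ω} (hs : MeasurableSet[m₁] s) :
    ∫ ω in s, φ (X' (I ω) ω - X (I ω) ω) * ψ (X' (I ω) ω - X (I ω) ω) ∂μ
      = ∑ i, μ.real (I ⁻¹' {i}) * (μ.real s * ∫ ω, φ (X' i ω) * ψ (X' i ω) ∂μ
          + ∫ ω in s, φ (X i ω) * ψ (X i ω) ∂μ) := by
  have hmean (L : E →L[ℝ] ℝ) (i : ι) : ∫ ω, L (X' i ω) ∂μ = 0 := by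
    rw [L.integral_comp_comm ((hX'₂ i).integrable one_le_two), hX'₀, map_zero]
  have hX₁₂ (L : E →L[ℝ] ℝ) (i : ι) : Measurable[m₁ ⊔ m₂] fun ω => L (X i ω) :=
    L.measurable.comp ((hX i).mono le_sup_left le_rfl)
  have hX'₁₂ (L : E →L[ℝ] ℝ) (i : ι) : Measurable[m₁ ⊔ m₂] fun ω => L (X' i ω) :=
    L.measurable.comp ((hX' i).mono le_sup_right le_rfl)
  set F : ι → Ω → ℝ := fun i =>
    s.indicator fun ω => (φ (X' i ω) - φ (X i ω)) * (ψ (X' i ω) - ψ (X i ω))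
  have hF : ∀ i, Measurable[m₁ ⊔ m₂] (F i) := fun i =>
    (((hX'₁₂ φ i).sub (hX₁₂ φ i)).mul ((hX'₁₂ ψ i).sub (hX₁₂ ψ i))).indicator
      (le_sup_left (b := m₂) _ hs)
  have hFi : ∀ i, Integrable (F i) μ := fun i =>
    (((φ.comp_memLp' (hX'₂ i)).sub (φ.comp_memLp' (hX₂ i))).integrable_mul
      ((ψ.comp_memLp' (hX'₂ i)).sub (ψ.comp_memLp' (hX₂ i)))).indicator (hm₁ _ hs)
  simp only [map_sub]
  rw [← integral_indicator (hm₁ _ hs)]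
  change ∫ ω, F (I ω) ω ∂μ = _
  rw [integral_apply_index_of_indep hI (sup_le hm₁ hm₂) hI_indep hF hFi]
  refine Finset.sum_congr rfl fun i _ => congrArg _ ?_
  rw [integral_indicator (hm₁ _ hs)]
  exact (setIntegral_sub_mul_sub_of_indep h hm₁ hm₂ hs
    (φ.measurable.comp (hX i)) (ψ.measurable.comp (hX i)) (φ.measurable.comp (hX' i))
    (ψ.measurable.comp (hX' i)) (φ.comp_memLp' (hX₂ i)) (ψ.comp_memLp' (hX₂ i))
    (φ.comp_memLp' (hX'₂ i)) (ψ.comp_memLp' (hX'₂ i)) (hmean φ i) (hmean ψ i))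

lemma condExp_ae_eq_const_add_mul_condExp [IsFiniteMeasure μ] (hm : m ≤ mΩ) {f g : Ω → ℝ}
    (hf : Integrable f μ) (hg : Integrable g μ) (c a : ℝ)
    (h : ∀ s, MeasurableSet[m] s → ∫ ω in s, f ω ∂μ = c * μ.real s + a * ∫ ω in s, g ω ∂μ) :
    μ[f|m] =ᵐ[μ] fun ω => c + a * μ[g|m] ω := by
  refine (ae_eq_condExp_of_forall_setIntegral_eq (g := fun ω => c + a * μ[g|m] ω) hm hf
    (fun s _ _ => ((integrable_const c).add (integrable_condExp.const_mul a)).integrableOn)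
    (fun s hs _ => ?_)
    (stronglyMeasurable_const.add
      (stronglyMeasurable_condExp.const_mul a)).aestronglyMeasurable).symm
  rw [integral_add (integrable_const c).integrableOn (integrable_condExp.const_mul a).integrableOn,
    setIntegral_const, integral_const_mul, setIntegral_condExp hm hg hs, h s hs, smul_eq_mul,
    mul_comm]

lemma condExp_index_sub_mul_sub_of_indep {ι E : Type*} [Fintype ι] [MeasurableSpace ι]
    [MeasurableSingletonClass ι] [NormedAddCommGroup E] [NormedSpace ℝ E] [CompleteSpace E]
    [MeasurableSpace E] [BorelSpace E] [IsFiniteMeasure μ] {I : Ω → ι} (hI : Measurable I)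
    (hunif : ∀ i, μ.real (I ⁻¹' {i}) = (Fintype.card ι : ℝ)⁻¹) (hm : m ≤ m₁) (hm₁ : m₁ ≤ mΩ)
    (hm₂ : m₂ ≤ mΩ) (h : Indep m₁ m₂ μ)
    (hI_indep : Indep (MeasurableSpace.comap I inferInstance) (m₁ ⊔ m₂) μ) (φ ψ : E →L[ℝ] ℝ)
    {X X' : ι → Ω → E} (hX : ∀ i, Measurable[m₁] (X i)) (hX' : ∀ i, Measurable[m₂] (X' i))
    (hX₂ : ∀ i, MemLp (X i) 2 μ) (hX'₂ : ∀ i, MemLp (X' i) 2 μ) (hX'₀ : ∀ i, ∫ ω, X' i ω ∂μ = 0)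
    (hcov : ∀ i, ∫ ω, φ (X' i ω) * ψ (X' i ω) ∂μ = ∫ ω, φ (X i ω) * ψ (X i ω) ∂μ) :
    μ[fun ω => φ (X' (I ω) ω - X (I ω) ω) * ψ (X' (I ω) ω - X (I ω) ω) | m]
      =ᵐ[μ] fun ω => (Fintype.card ι : ℝ)⁻¹ * ∑ i, ∫ ω, φ (X i ω) * ψ (X i ω) ∂μ
        + (Fintype.card ι : ℝ)⁻¹ * μ[fun ω => ∑ i, φ (X i ω) * ψ (X i ω) | m] ω := by
  have hXX (i : ι) : Integrable (fun ω => φ (X i ω) * ψ (X i ω)) μ :=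
    (φ.comp_memLp' (hX₂ i)).integrable_mul (ψ.comp_memLp' (hX₂ i))
  have hint : Integrable (fun ω => φ (X' (I ω) ω - X (I ω) ω) * ψ (X' (I ω) ω - X (I ω) ω)) μ :=
    integrable_apply_index (Y := fun i ω => φ (X' i ω - X i ω) * ψ (X' i ω - X i ω))
      (fun i => (φ.comp_memLp' ((hX'₂ i).sub (hX₂ i))).integrable_mul
        (ψ.comp_memLp' ((hX'₂ i).sub (hX₂ i)))) hI
  refine condExp_ae_eq_const_add_mul_condExp (hm.trans hm₁) hint
    (integrable_finsetSum _ fun i _ => hXX i) _ _ fun s hs => ?_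
  rw [setIntegral_index_sub_mul_sub_of_indep hI hm₁ hm₂ h hI_indep φ ψ hX hX' hX₂ hX'₂ hX'₀
    (hm _ hs), integral_finsetSum _ fun i _ => (hXX i).integrableOn]
  simp only [hunif, hcov, mul_add, Finset.sum_add_distrib, ← Finset.mul_sum]
  ring

end

theorem stmt16_general (n d : ℕ) (hn : 1 ≤ n)
    (Ω : Type) (mΩ : MeasurableSpace Ω) (μ : Measure Ω)
    (hμ : IsProbabilityMeasure μ)
    (X X' : Fin n → Ω → EuclideanSpace ℝ (Fin d))
    (hXm : ∀ i, Measurable (X i)) (hX'm : ∀ i, Measurable (X' i))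
    (hL2 : ∀ i, MemLp (X i) 2 μ)
    (hmean : ∀ i, ∫ ω, X i ω ∂μ = 0)
    -- ∑_i E[X_{ij} X_{ik}] = n δ_{jk}
    (hcov : ∀ j k : Fin d,
      (∑ i, ∫ ω, X i ω j * X i ω k ∂μ) = n * (if j = k then 1 else 0))
    -- the 2n random vectors X_1, …, X_n, X'_1, …, X'_n are mutually independent
    (hindep : iIndepFun (Sum.elim X X') μ)
    -- (X'_1, …, X'_n) has the same (joint) law as (X_1, …, X_n)
    (hcopy : Measure.map (fun ω => fun i => X' i ω) μ
      = Measure.map (fun ω => fun i => X i ω) μ)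
    (I : Ω → Fin n) (hIm : Measurable I)
    (hIunif : ∀ i, μ (I ⁻¹' {i}) = 1 / n)
    (hIindep : IndepFun I (fun ω => (fun i => X i ω, fun i => X' i ω)) μ)
    (W δ : Ω → EuclideanSpace ℝ (Fin d))
    (hW : ∀ ω, W ω = (Real.sqrt n)⁻¹ • ∑ i, X i ω)
    (hδ : ∀ ω, δ ω = (Real.sqrt n)⁻¹ • (X' (I ω) ω - X (I ω) ω)) :
    ∀ j k : Fin d,
      μ[fun ω => δ ω j * δ ω k | MeasurableSpace.comap W inferInstance]
        =ᵐ[μ] fun ω =>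
          2 / n * (if j = k then 1 else 0)
            + 1 / n *
              ((μ[fun ω => (n : ℝ)⁻¹ * ∑ i, X i ω j * X i ω k |
                  MeasurableSpace.comap W inferInstance]) ω
                - (if j = k then 1 else 0)) := by
  intro j k
  set V : Ω → Fin n → EuclideanSpace ℝ (Fin d) := fun ω i => X i ω
  set V' : Ω → Fin n → EuclideanSpace ℝ (Fin d) := fun ω i => X' i ω
  have hV : Measurable V := measurable_pi_lambda _ hXm
  have hV' : Measurable V' := measurable_pi_lambda _ hX'm
  have hident (i : Fin n) : IdentDistrib (X' i) (X i) μ μ :=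
    (IdentDistrib.mk hV'.aemeasurable hV.aemeasurable hcopy).comp (measurable_pi_apply i)
  have hWV : MeasurableSpace.comap W inferInstance ≤ MeasurableSpace.comap V inferInstance := by
    rw [show W = (fun x => (Real.sqrt n)⁻¹ • ∑ i, x i) ∘ V from funext hW]
    exact (Measurable.comp (by fun_prop) (comap_measurable V)).comap_le
  have hI_indep : Indep (MeasurableSpace.comap I inferInstance)
      (MeasurableSpace.comap V inferInstance ⊔ MeasurableSpace.comap V' inferInstance) μ := by
    rw [← MeasurableSpace.comap_prodMk]
    exact (IndepFun_iff_Indep _ _ _).1 hIindep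
  have hcond := condExp_index_sub_mul_sub_of_indep hIm (by simp [Measure.real, hIunif]) hWV
    hV.comap_le hV'.comap_le ((IndepFun_iff_Indep _ _ _).1 (hindep.indepFun_sumElim hXm hX'm))
    hI_indep (EuclideanSpace.proj (𝕜 := ℝ) j) (EuclideanSpace.proj (𝕜 := ℝ) k)
    (X := X) (X' := X')
    (fun i => (measurable_pi_apply i).comp (comap_measurable V))
    (fun i => (measurable_pi_apply i).comp (comap_measurable V')) hL2
    (fun i => (hident i).memLp_iff.2 (hL2 i)) (fun i => (hident i).integral_eq.trans (hmean i))
    (fun i => ((hident i).comp ((EuclideanSpace.proj (𝕜 := ℝ) j).measurable.mul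
      (EuclideanSpace.proj (𝕜 := ℝ) k).measurable)).integral_eq)
  simp only [EuclideanSpace.coe_proj, PiLp.sub_apply, Fintype.card_fin, hcov j k] at hcond
  have hδδ : (fun ω => δ ω j * δ ω k) = fun ω => (n : ℝ)⁻¹ *
      ((X' (I ω) ω j - X (I ω) ω j) * (X' (I ω) ω k - X (I ω) ω k)) := by
    funext ω
    have hsqrt : (Real.sqrt n)⁻¹ * (Real.sqrt n)⁻¹ = (n : ℝ)⁻¹ := by
      rw [← mul_inv, Real.mul_self_sqrt (Nat.cast_nonneg n)]
    simp only [hδ ω, PiLp.smul_apply, PiLp.sub_apply, smul_eq_mul, ← hsqrt]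
    ring
  have hδδ_smul : μ[fun ω => δ ω j * δ ω k | MeasurableSpace.comap W inferInstance] =ᵐ[μ]
      fun ω => (n : ℝ)⁻¹ *
        μ[fun ω => (X' (I ω) ω j - X (I ω) ω j) * (X' (I ω) ω k - X (I ω) ω k) |
          MeasurableSpace.comap W inferInstance] ω := by
    rw [hδδ]
    exact condExp_smul (n : ℝ)⁻¹
      (fun ω => (X' (I ω) ω j - X (I ω) ω j) * (X' (I ω) ω k - X (I ω) ω k)) _
  have hS_smul :
      μ[fun ω => (n : ℝ)⁻¹ * ∑ i, X i ω j * X i ω k | MeasurableSpace.comap W inferInstance]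
      =ᵐ[μ] fun ω => (n : ℝ)⁻¹ * μ[fun ω => ∑ i, X i ω j * X i ω k |
        MeasurableSpace.comap W inferInstance] ω :=
    condExp_smul (n : ℝ)⁻¹ (fun ω => ∑ i, X i ω j * X i ω k) _
  have hn₀ : (n : ℝ) ≠ 0 := Nat.cast_ne_zero.2 (by omega)
  filter_upwards [hδδ_smul, hS_smul, hcond] with ω h₁ h₂ h₃
  rw [h₁, h₂, h₃]
  field_simp
  ring

theorem stmt16 (n d : ℕ) (hn : 1 ≤ n) (hd : 1 ≤ d)
    (Ω : Type) (mΩ : MeasurableSpace Ω) (μ : Measure Ω)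
    (hμ : IsProbabilityMeasure μ)
    (X X' : Fin n → Ω → EuclideanSpace ℝ (Fin d))
    (hXm : ∀ i, Measurable (X i)) (hX'm : ∀ i, Measurable (X' i))
    (hL2 : ∀ i, MemLp (X i) 2 μ)
    (hmean : ∀ i, ∫ ω, X i ω ∂μ = 0)
    -- ∑_i E[X_{ij} X_{ik}] = n δ_{jk}
    (hcov : ∀ j k : Fin d,
      (∑ i, ∫ ω, X i ω j * X i ω k ∂μ) = n * (if j = k then 1 else 0))
    -- the 2n random vectors X_1, …, X_n, X'_1, …, X'_n are mutually independent
    (hindep : iIndepFun (Sum.elim X X') μ)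
    -- (X'_1, …, X'_n) has the same (joint) law as (X_1, …, X_n)
    (hcopy : Measure.map (fun ω => fun i => X' i ω) μ
      = Measure.map (fun ω => fun i => X i ω) μ)
    (I : Ω → Fin n) (hIm : Measurable I)
    (hIunif : ∀ i, μ (I ⁻¹' {i}) = 1 / n)
    (hIindep : IndepFun I (fun ω => (fun i => X i ω, fun i => X' i ω)) μ)
    (W δ : Ω → EuclideanSpace ℝ (Fin d))
    (hW : ∀ ω, W ω = (Real.sqrt n)⁻¹ • ∑ i, X i ω)
    (hδ : ∀ ω, δ ω = (Real.sqrt n)⁻¹ • (X' (I ω) ω - X (I ω) ω)) :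
    ∀ j k : Fin d,
      μ[fun ω => δ ω j * δ ω k | MeasurableSpace.comap W inferInstance]
        =ᵐ[μ] fun ω =>
          2 / n * (if j = k then 1 else 0)
            + 1 / n *
              ((μ[fun ω => (n : ℝ)⁻¹ * ∑ i, X i ω j * X i ω k |
                  MeasurableSpace.comap W inferInstance]) ω
                - (if j = k then 1 else 0)) :=
  stmt16_general n d hn Ω mΩ μ hμ X X' hXm hX'm hL2 hmean hcov hindep hcopy I hIm hIunif hIindep W δ
    hW hδ
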